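/- Fix real numbers γ > 0 with γ ≠ 1, J > 1, ℓ > 1 and ϖ ∈ (0,1). Define ε_o = ( (((ℓ−1)/(ϖ^{−1}−1))^{−1/γ} − 1)·ϖ + 1 )^{−1} and f₁ : (0,1] → ℝ by f₁(ε) = [ (ℓ−1) ε^{1−γ} + (ε + (1−ε)/ϖ)^{1−γ} − ℓ ] / (J^{1−γ} − 1). Then ε* = min(ε_o, 1) satisfies ε* ∈ (0,1] and f₁(ε) ≤ f₁(ε*) for every ε ∈ (0,1]; that is, min(max(ε_o,0),1) is a maximizer of f₁ over (0,1]. (Theorem 3 of the paper.) -/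

import Mathlib

open Real Set

/-!
Up to the positive factor `(1 - γ) / (J ^ (1 - γ) - 1)` and an additive constant, `f₁` is
`P ε = ((ℓ - 1) ε ^ (1 - γ) + u ε ^ (1 - γ)) / (1 - γ)` with `u ε = ε + (1 - ε) / ϖ`, whose derivative
`(ℓ - 1) ε ^ (-γ) - (ϖ⁻¹ - 1) u ε ^ (-γ)` is nonnegative exactly when
`((ℓ - 1) / (ϖ⁻¹ - 1)) ^ (-1 / γ) ε ≤ u ε`, i.e. when `ε ≤ ε_o`. So `P` increases up to `ε_o` and
decreases after it, and its maximum over `(0, 1]` sits at `min ε_o 1`.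
-/

lemma div_rpow_sub_one_pos {p J : ℝ} (hp : p ≠ 0) (hJ : 1 < J) : 0 < p / (J ^ p - 1) := by
  rcases hp.lt_or_gt with hp | hp
  · exact div_pos_of_neg_of_neg hp (sub_neg.mpr (rpow_lt_one_of_one_lt_of_neg hJ hp))
  · exact div_pos hp (sub_pos.mpr (one_lt_rpow hJ hp))

lemma le_apply_min_of_hasDerivAt {f f' : ℝ → ℝ} {a b m x : ℝ} (ham : a < m)
    (hf : ∀ y ∈ Ioc a b, HasDerivAt f (f' y) y)
    (hinc : ∀ y ∈ Ioo a b, y < m → 0 ≤ f' y) (hdec : ∀ y ∈ Ioo a b, m < y → f' y ≤ 0)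
    (hx : x ∈ Ioc a b) : f x ≤ f (min m b) := by
  have hcont : ContinuousOn f (Ioc a b) := fun y hy => (hf y hy).continuousAt.continuousWithinAt
  rcases le_or_gt x (min m b) with hxt | htx
  · have hsub : Icc x (min m b) ⊆ Ioc a b := Icc_subset_Ioc hx.1 (min_le_right _ _)
    refine monotoneOn_of_hasDerivWithinAt_nonneg (f' := f') (convex_Icc _ _) (hcont.mono hsub)
      (fun y hy => ?_) (fun y hy => ?_) ⟨le_rfl, hxt⟩ ⟨hxt, le_rfl⟩ hxt <;> rw [interior_Icc] at hy
    · exact (hf y (hsub (Ioo_subset_Icc_self hy))).hasDerivWithinAt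
    · exact hinc y ⟨hx.1.trans hy.1, hy.2.trans_le (min_le_right _ _)⟩
        (hy.2.trans_le (min_le_left _ _))
  · have hmb : m < b := (min_lt_iff.mp (htx.trans_le hx.2)).resolve_right (lt_irrefl b)
    rw [min_eq_left hmb.le] at htx ⊢
    have hsub : Icc m x ⊆ Ioc a b := Icc_subset_Ioc ham hx.2
    refine antitoneOn_of_hasDerivWithinAt_nonpos (f' := f') (convex_Icc _ _) (hcont.mono hsub)
      (fun y hy => ?_) (fun y hy => ?_) ⟨le_rfl, htx.le⟩ ⟨htx.le, le_rfl⟩ htx.le <;>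
      rw [interior_Icc] at hy
    · exact (hf y (hsub (Ioo_subset_Icc_self hy))).hasDerivWithinAt
    · exact hdec y ⟨ham.trans hy.1, hy.2.trans_le hx.2⟩ hy.1

lemma mul_rpow_neg_le_mul_rpow_neg_iff {a b γ x u : ℝ} (ha : 0 < a) (hb : 0 < b) (hγ : 0 < γ)
    (hx : 0 < x) (hu : 0 < u) :
    b * u ^ (-γ) ≤ a * x ^ (-γ) ↔ (a / b) ^ (-(1 / γ)) * x ≤ u := by
  have hab : 0 < a / b := div_pos ha hb
  have hq : 0 < (a / b) ^ (-(1 / γ)) := rpow_pos_of_pos hab _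
  rw [← rpow_le_rpow_iff_of_neg hu (mul_pos hq hx) (neg_lt_zero.mpr hγ), mul_rpow hq.le hx.le,
    ← rpow_mul hab.le, neg_mul_neg, one_div, inv_mul_cancel₀ hγ.ne', rpow_one,
    div_mul_eq_mul_div, le_div_iff₀ hb, mul_comm b]

lemma mul_le_add_sub_div_iff {q ϖ x : ℝ} (hϖ : 0 < ϖ) (hd : 0 < (q - 1) * ϖ + 1) :
    q * x ≤ x + (1 - x) / ϖ ↔ x ≤ ((q - 1) * ϖ + 1)⁻¹ := by
  rw [inv_eq_one_div, le_div_iff₀ hd, ← mul_le_mul_iff_of_pos_right hϖ, add_mul,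
    div_mul_cancel₀ _ hϖ.ne']
  constructor <;> intro h <;> linarith

lemma add_sub_div_pos {ϖ x : ℝ} (hϖ : 0 < ϖ) (hx : 0 < x) (hx1 : x ≤ 1) :
    0 < x + (1 - x) / ϖ :=
  add_pos_of_pos_of_nonneg hx (div_nonneg (sub_nonneg.mpr hx1) hϖ.le)

/-- `ε_o` of the paper. -/
noncomputable def twoStairThreshold (γ ℓ ϖ : ℝ) : ℝ :=
  ((((ℓ - 1) / (ϖ⁻¹ - 1)) ^ (-(1 / γ)) - 1) * ϖ + 1)⁻¹

noncomputable def twoStairPotential (γ ℓ ϖ x : ℝ) : ℝ :=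
  ((ℓ - 1) * x ^ (1 - γ) + (x + (1 - x) / ϖ) ^ (1 - γ)) / (1 - γ)

section

variable {γ ℓ ϖ : ℝ}

lemma twoStairThreshold_pos (hℓ : 1 < ℓ) (hϖ : ϖ ∈ Ioo 0 1) : 0 < twoStairThreshold γ ℓ ϖ := by
  have hq : 0 < ((ℓ - 1) / (ϖ⁻¹ - 1)) ^ (-(1 / γ)) :=
    rpow_pos_of_pos (div_pos (sub_pos.mpr hℓ) (sub_pos.mpr ((one_lt_inv₀ hϖ.1).mpr hϖ.2))) _
  exact inv_pos.mpr (by nlinarith [mul_pos hq hϖ.1, hϖ.2])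

lemma hasDerivAt_twoStairPotential {x : ℝ} (hγ1 : γ ≠ 1) (hx : 0 < x)
    (hu : 0 < x + (1 - x) / ϖ) :
    HasDerivAt (twoStairPotential γ ℓ ϖ)
      ((ℓ - 1) * x ^ (-γ) - (ϖ⁻¹ - 1) * (x + (1 - x) / ϖ) ^ (-γ)) x := by
  have hload : HasDerivAt (fun y => y + (1 - y) / ϖ) (1 + -1 / ϖ) x :=
    (hasDerivAt_id x).add (((hasDerivAt_id x).const_sub 1).div_const ϖ)
  have h1γ : 1 - γ ≠ 0 := sub_ne_zero.mpr hγ1.symm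
  refine ((((hasDerivAt_rpow_const (p := 1 - γ) (Or.inl hx.ne')).const_mul (ℓ - 1)).add
    (hload.rpow_const (p := 1 - γ) (Or.inl hu.ne'))).div_const (1 - γ)).congr_deriv ?_
  rw [show 1 - γ - 1 = -γ by ring]
  field_simp
  ring

lemma twoStairPotential_deriv_nonneg_iff (hγ : 0 < γ) (hℓ : 1 < ℓ) (hϖ : ϖ ∈ Ioo 0 1) {x : ℝ}
    (hx : 0 < x) (hx1 : x ≤ 1) :
    0 ≤ (ℓ - 1) * x ^ (-γ) - (ϖ⁻¹ - 1) * (x + (1 - x) / ϖ) ^ (-γ) ↔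
      x ≤ twoStairThreshold γ ℓ ϖ := by
  rw [sub_nonneg, mul_rpow_neg_le_mul_rpow_neg_iff (sub_pos.mpr hℓ)
    (sub_pos.mpr ((one_lt_inv₀ hϖ.1).mpr hϖ.2)) hγ hx (add_sub_div_pos hϖ.1 hx hx1)]
  exact mul_le_add_sub_div_iff hϖ.1 (inv_pos.mp (twoStairThreshold_pos hℓ hϖ))

lemma twoStairPotential_le_min_threshold (hγ : 0 < γ) (hγ1 : γ ≠ 1) (hℓ : 1 < ℓ)
    (hϖ : ϖ ∈ Ioo 0 1) {ε : ℝ} (hε : ε ∈ Ioc 0 1) :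
    twoStairPotential γ ℓ ϖ ε ≤ twoStairPotential γ ℓ ϖ (min (twoStairThreshold γ ℓ ϖ) 1) :=
  le_apply_min_of_hasDerivAt (twoStairThreshold_pos hℓ hϖ)
    (fun _ hy => hasDerivAt_twoStairPotential hγ1 hy.1 (add_sub_div_pos hϖ.1 hy.1 hy.2))
    (fun _ hy hlt => (twoStairPotential_deriv_nonneg_iff hγ hℓ hϖ hy.1 hy.2.le).mpr hlt.le)
    (fun _ hy hgt => (not_le.mp fun h =>
      hgt.not_ge ((twoStairPotential_deriv_nonneg_iff hγ hℓ hϖ hy.1 hy.2.le).mp h)).le)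
    hε

lemma twoStairObjective_le_of_potential_le {J x y : ℝ} (hJ : 1 < J) (hγ1 : γ ≠ 1)
    (h : twoStairPotential γ ℓ ϖ x ≤ twoStairPotential γ ℓ ϖ y) :
    ((ℓ - 1) * x ^ (1 - γ) + (x + (1 - x) / ϖ) ^ (1 - γ) - ℓ) / (J ^ (1 - γ) - 1) ≤
      ((ℓ - 1) * y ^ (1 - γ) + (y + (1 - y) / ϖ) ^ (1 - γ) - ℓ) / (J ^ (1 - γ) - 1) := by
  have h1γ : 1 - γ ≠ 0 := sub_ne_zero.mpr hγ1.symm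
  have hκ : 0 < (1 - γ) / (J ^ (1 - γ) - 1) := div_rpow_sub_one_pos h1γ hJ
  have hD : J ^ (1 - γ) - 1 ≠ 0 := (div_ne_zero_iff.mp hκ.ne').2
  have haffine : ∀ z, ((ℓ - 1) * z ^ (1 - γ) + (z + (1 - z) / ϖ) ^ (1 - γ) - ℓ) /
      (J ^ (1 - γ) - 1) =
        (1 - γ) / (J ^ (1 - γ) - 1) * twoStairPotential γ ℓ ϖ z - ℓ / (J ^ (1 - γ) - 1) := by
    intro z
    unfold twoStairPotential
    field_simp
  rw [haffine, haffine]
  exact sub_le_sub_right (mul_le_mul_of_nonneg_left h hκ.le) _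

end

/-- Theorem 3 of the paper: for `γ > 0`, `γ ≠ 1`, `J > 1`, `ℓ > 1` and
`ϖ ∈ (0,1)`, the point `ε* = min(ε_o, 1)`, where
`ε_o = ((((ℓ-1)/(ϖ⁻¹-1))^{-1/γ} - 1) ϖ + 1)⁻¹`, lies in `(0,1]` and maximizes
the two-stair objective `f₁` over `(0,1]`. -/
theorem two_stair_optimal_epsilon (γ J ℓ ϖ : ℝ) (hγ : 0 < γ) (hγ1 : γ ≠ 1)
    (hJ : 1 < J) (hℓ : 1 < ℓ) (hϖ : ϖ ∈ Set.Ioo (0 : ℝ) 1) :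
    min ((((ℓ - 1) / (ϖ⁻¹ - 1)) ^ (-(1 / γ)) - 1) * ϖ + 1)⁻¹ 1 ∈ Set.Ioc (0 : ℝ) 1 ∧
      ∀ ε ∈ Set.Ioc (0 : ℝ) 1,
        ((ℓ - 1) * ε ^ (1 - γ) + (ε + (1 - ε) / ϖ) ^ (1 - γ) - ℓ) /
            (J ^ (1 - γ) - 1) ≤
          ((ℓ - 1) * (min ((((ℓ - 1) / (ϖ⁻¹ - 1)) ^ (-(1 / γ)) - 1) * ϖ + 1)⁻¹ 1) ^ (1 - γ) +
              ((min ((((ℓ - 1) / (ϖ⁻¹ - 1)) ^ (-(1 / γ)) - 1) * ϖ + 1)⁻¹ 1) +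
                  (1 - min ((((ℓ - 1) / (ϖ⁻¹ - 1)) ^ (-(1 / γ)) - 1) * ϖ + 1)⁻¹ 1) / ϖ) ^
                (1 - γ) -
              ℓ) /
            (J ^ (1 - γ) - 1) :=
  ⟨⟨lt_min (twoStairThreshold_pos hℓ hϖ) one_pos, min_le_right _ _⟩, fun _ hε =>
    twoStairObjective_le_of_potential_le hJ hγ1
      (twoStairPotential_le_min_threshold hγ hγ1 hℓ hϖ hε)⟩
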